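/- Glynn's monomial formula: For every m×m complex matrix A = (a_{ij}), every p ∈ ℕ^m, and every z ∈ ℂ^m, ∏_{i=1}^m ( Σ_{j=1}^m a_{ij} z_j )^{p_i} = Σ_{q ∈ ℕ^m, |q| = |p|} (z^q / q!) · Per(A_{p,q}). -/

import Mathlib

open BigOperators Matrix

/-- The list of row indices of `A_{p,·}`: each index `i` repeated `p i` times, in order. -/
def repList {m : ℕ} (p : Fin m → ℕ) : List (Fin m) :=
  (List.finRange m).flatMap fun i => List.replicate (p i) i

lemma repList_length {m : ℕ} (p : Fin m → ℕ) : (repList p).length = ∑ i, p i := by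
  simp only [repList, List.length_flatMap, Fin.sum_univ_def]
  congr 1
  apply List.map_congr_left
  intro i _
  simp

/-- The matrix `A_{p,q}`: row `i` repeated `p i` times, column `j` repeated `q j` times. -/
def repMat {m : ℕ} (A : Matrix (Fin m) (Fin m) ℂ) (p q : Fin m → ℕ) :
    Matrix (Fin (∑ i, p i)) (Fin (∑ j, q j)) ℂ :=
  Matrix.of fun r c =>
    A ((repList p).get (Fin.cast (repList_length p).symm r))
      ((repList q).get (Fin.cast (repList_length q).symm c))

/-- `Per(A_{p,q})`; by convention `0` when the matrix is not square. -/
noncomputable def perRep {m : ℕ} (A : Matrix (Fin m) (Fin m) ℂ) (p q : Fin m → ℕ) : ℂ :=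
  if h : (∑ i, p i) = (∑ j, q j) then
    (Matrix.of fun r c : Fin (∑ i, p i) => repMat A p q r (Fin.cast h c)).permanent
  else 0

/-! Let `ρ : Fin |p| → Fin m` list the rows of `A_{p,·}`. Both sides are sums over all maps
`f : Fin |p| → Fin m` of `(∏ r, A (ρ r) (f r)) * z ^ c(f)`, where `c(f) j` is the size of the fibre
of `f` over `j`. On the left this is distributivity. On the right, `Per(A_{p,q})` sums
`∏ r, A (ρ r) (κ (σ r))` over permutations `σ`, where `κ` lists the columns of `A_{·,q}`; as `σ`
varies, `κ ∘ σ` runs through the maps `f` with `c(f) = q`, each one hit by a coset of the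
stabiliser of `κ`, i.e. exactly `q!` times, which cancels the `q!` in the denominator. -/

open Finset

section FiberCard

variable {α α' β : Type*} [Fintype α] [DecidableEq β]

def fiberCard (f : α → β) (j : β) : ℕ := Fintype.card {a // f a = j}

theorem prod_comp_eq_prod_pow_fiberCard [Fintype β] {M : Type*} [CommMonoid M]
    (f : α → β) (g : β → M) : ∏ a, g (f a) = ∏ j, g j ^ fiberCard f j := by
  simp only [← Fintype.prod_fiberwise' f g, prod_const, card_univ, fiberCard]

theorem sum_fiberCard [Fintype β] (f : α → β) : ∑ j, fiberCard f j = Fintype.card α := by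
  rw [← Fintype.card_congr (Equiv.sigmaFiberEquiv f), Fintype.card_sigma]
  rfl

theorem fiberCard_comp_equiv [Fintype α'] (f : α → β) (e : α' ≃ α) :
    fiberCard (f ∘ e) = fiberCard f :=
  funext fun _ => Fintype.card_congr (e.subtypeEquiv fun _ => Iff.rfl)

variable [DecidableEq α]

theorem card_perm_comp_eq_of_fiberCard_eq [Fintype β] {κ f : α → β}
    (h : fiberCard f = fiberCard κ) :
    Fintype.card {σ : Equiv.Perm α // κ ∘ σ = f} = ∏ j, (fiberCard κ j).factorial := by
  let τ : Equiv.Perm α := Equiv.ofFiberEquiv fun j => Fintype.equivOfCardEq (congrFun h j)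
  have hτ : κ ∘ τ = f := funext (Equiv.ofFiberEquiv_map _)
  refine (Fintype.card_congr ((Equiv.mulRight τ⁻¹).subtypeEquiv fun σ => ?_)).trans
    (DomMulAct.stabilizer_card κ)
  rw [← hτ]
  simp only [funext_iff, Function.comp_apply, Equiv.coe_mulRight, Equiv.Perm.mul_apply]
  rw [τ.forall_congr_left]
  simp

theorem card_perm_comp_eq_of_fiberCard_ne {κ f : α → β} (h : fiberCard f ≠ fiberCard κ) :
    Fintype.card {σ : Equiv.Perm α // κ ∘ σ = f} = 0 :=
  Fintype.card_eq_zero_iff.mpr ⟨fun ⟨σ, hσ⟩ => h (hσ ▸ fiberCard_comp_equiv κ σ)⟩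

theorem sum_perm_comp [Fintype β] {M : Type*} [AddCommMonoid M] (κ : α → β)
    (g : (α → β) → M) :
    ∑ σ : Equiv.Perm α, g (κ ∘ σ) =
      (∏ j, (fiberCard κ j).factorial) • ∑ f with fiberCard f = fiberCard κ, g f := by
  rw [← Finset.sum_fiberwise' univ (fun σ : Equiv.Perm α => κ ∘ σ) g, smul_sum, sum_filter]
  refine sum_congr rfl fun f _ => ?_
  rw [sum_const, ← Fintype.card_subtype]
  split_ifs with h
  · rw [card_perm_comp_eq_of_fiberCard_eq h]
  · rw [card_perm_comp_eq_of_fiberCard_ne h, zero_smul]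

end FiberCard

section RepIndex

variable {m : ℕ}

def repIndex (p : Fin m → ℕ) : Fin (∑ i, p i) → Fin m :=
  fun r => (repList p).get (Fin.cast (repList_length p).symm r)

theorem sum_repIndex {M : Type*} [AddCommMonoid M] (p : Fin m → ℕ) (g : Fin m → M) :
    ∑ r, g (repIndex p r) = ∑ i, p i • g i := by
  simp only [repIndex]
  rw [Fin.sum_congr' (fun r => g ((repList p).get r)) (repList_length p).symm]
  simp only [List.get_eq_getElem, Fin.sum_univ_fun_getElem]
  simp [repList, List.flatMap, List.sum_flatten, Function.comp_def, Fin.sum_univ_def]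

theorem fiberCard_repIndex (p : Fin m → ℕ) : fiberCard (repIndex p) = p := by
  funext j
  simp only [fiberCard, Fintype.card_subtype, card_filter]
  rw [sum_repIndex p fun i => if i = j then 1 else 0]
  simp

theorem prod_sum_mul_pow_eq_sum_fiberCard {R : Type*} [CommSemiring R]
    (A : Matrix (Fin m) (Fin m) R) (p : Fin m → ℕ) (z : Fin m → R) :
    ∏ i, (∑ j, A i j * z j) ^ p i =
      ∑ f : Fin (∑ i, p i) → Fin m, (∏ r, A (repIndex p r) (f r)) * ∏ j, z j ^ fiberCard f j := by
  conv_lhs => rw [← fiberCard_repIndex p, ← prod_comp_eq_prod_pow_fiberCard, Fintype.prod_sum]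
  simp only [prod_mul_distrib, prod_comp_eq_prod_pow_fiberCard _ z]

theorem perRep_eq_sum_perm (A : Matrix (Fin m) (Fin m) ℂ) {p q : Fin m → ℕ}
    (h : ∑ i, p i = ∑ j, q j) :
    perRep A p q = ∑ σ : Equiv.Perm (Fin (∑ i, p i)),
      ∏ r, A (repIndex p r) (repIndex q (Fin.cast h (σ r))) := by
  rw [perRep, dif_pos h, ← permanent_transpose]
  rfl

theorem perRep_eq_prod_factorial_mul_sum (A : Matrix (Fin m) (Fin m) ℂ) {p q : Fin m → ℕ}
    (h : ∑ i, p i = ∑ j, q j) :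
    perRep A p q = (∏ j, ((q j).factorial : ℂ)) *
      ∑ f : Fin (∑ i, p i) → Fin m with fiberCard f = q, ∏ r, A (repIndex p r) (f r) := by
  have hκ : fiberCard (repIndex q ∘ Fin.cast h) = q :=
    (fiberCard_comp_equiv _ (finCongr h)).trans (fiberCard_repIndex q)
  rw [perRep_eq_sum_perm A h]
  refine (sum_perm_comp (repIndex q ∘ Fin.cast h) fun f => ∏ r, A (repIndex p r) (f r)).trans ?_
  rw [hκ, nsmul_eq_mul, Nat.cast_prod]

end RepIndex

/-- **Glynn's monomial formula.** -/
theorem glynn_monomial_formula (m : ℕ) (A : Matrix (Fin m) (Fin m) ℂ)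
    (p : Fin m → ℕ) (z : Fin m → ℂ) :
    ∏ i, (∑ j, A i j * z j) ^ p i =
      ∑ q ∈ Finset.Nat.antidiagonalTuple m (∑ i, p i),
        (∏ j, z j ^ q j) / (∏ j, (Nat.factorial (q j) : ℂ)) * perRep A p q := by
  have hmaps (f : Fin (∑ i, p i) → Fin m) :
      fiberCard f ∈ Finset.Nat.antidiagonalTuple m (∑ i, p i) := by
    rw [Finset.Nat.mem_antidiagonalTuple, sum_fiberCard, Fintype.card_fin]
  rw [prod_sum_mul_pow_eq_sum_fiberCard, ← sum_fiberwise_of_maps_to fun f _ => hmaps f]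
  refine sum_congr rfl fun q hq => ?_
  have hfact : (∏ j, ((q j).factorial : ℂ)) ≠ 0 :=
    prod_ne_zero_iff.mpr fun j _ => Nat.cast_ne_zero.mpr (Nat.factorial_ne_zero _)
  rw [perRep_eq_prod_factorial_mul_sum A (Finset.Nat.mem_antidiagonalTuple.mp hq).symm,
    ← mul_assoc, div_mul_cancel₀ _ hfact, mul_sum]
  refine sum_congr rfl fun f hf => ?_
  rw [(mem_filter.mp hf).2, mul_comm]
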